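/- arXiv:1702.08387 — 3 statements merged into one kernel-verified Lean document; each statement's English description precedes it below -/
import Mathlib

section
/- Let (X_n) be a Markov chain with operator P and invariant measure ν, f continuous with ∫ f dν = 0, and suppose f = g - Pg for a continuous function g with ‖g‖_∞ ≤ C'. Set S_n = Σ_{k=0}^{n-1} f(X_k). Then for every x, every ε > 0 and every n ∈ N, P_x(|S_n| > nε) ≤ 2 exp(−nε²/(8C'²) + ε/(4C') − 1/(2n)), provided nε > 2C'. -/
/-!
Write `M_n = ∑_{k<n} (g(X_{k+1}) - Pg(X_k))`. Since `f = g - Pg`, the sum `S_n` telescopes to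
`M_n + g(X_0) - g(X_n)`, so `|S_n - M_n| ≤ 2C'`. The increments of `M` take values in an interval
of length `2C'` and have zero conditional mean, so by the conditional form of Hoeffding's lemma
`M_n` is sub-Gaussian with variance proxy `nC'²`, and the Chernoff bound applied to `±M_n` at level
`nε - 2C'` gives `2 exp(-(nε - 2C')² / (2nC'²))`. This is at most the claimed bound except in a
window `nε ∈ (1.1 C', 3.6 C')`, where the claimed bound exceeds `1` once `n ≥ 2`; for `n = 1`
(more generally for `ε ≥ 2C'`) the event is empty because `|f| ≤ 2C'`.
-/

open MeasureTheory ProbabilityTheory Real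
open scoped NNReal

lemma exp_neg_mul_mul_cosh_add_mul_sinh_le {a : ℝ} (ha : |a| ≤ 1) (s : ℝ) :
    exp (-(a * s)) * (cosh s + a * sinh s) ≤ exp (s ^ 2 / 2) := by
  obtain ⟨ha₁, ha₂⟩ := abs_le.mp ha
  -- Hoeffding's lemma for the `±1`-valued law with mean `a`
  let μ : Measure ℝ := ENNReal.ofReal ((1 - a) / 2) • Measure.dirac (-1) +
    ENNReal.ofReal ((1 + a) / 2) • Measure.dirac 1
  have hμ : IsProbabilityMeasure μ := ⟨by
    simp only [μ, Measure.add_apply, Measure.smul_apply, measure_univ, smul_eq_mul, mul_one]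
    rw [← ENNReal.ofReal_add (by linarith) (by linarith)]
    norm_num [← add_div]⟩
  have hsupp : ∀ᵐ x ∂μ, x ∈ Set.Icc (-1 : ℝ) 1 := by
    simp only [μ, ae_add_measure_iff]
    constructor <;> refine Measure.ae_smul_measure ?_ _ <;> simp
  have hint (f : ℝ → ℝ) : ∫ x, f x ∂μ = (1 - a) / 2 * f (-1) + (1 + a) / 2 * f 1 := by
    rw [integral_add_measure ((integrable_dirac (by simp)).smul_measure (by simp))
        ((integrable_dirac (by simp)).smul_measure (by simp)),
      integral_smul_measure, integral_smul_measure, integral_dirac, integral_dirac,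
      ENNReal.toReal_ofReal (by linarith), ENNReal.toReal_ofReal (by linarith),
      smul_eq_mul, smul_eq_mul]
  have key := (hasSubgaussianMGF_of_mem_Icc aemeasurable_id hsupp).mgf_le s
  simp only [mgf, hint, id] at key
  convert key using 1
  · rw [show (1 - a) / 2 * -1 + (1 + a) / 2 * 1 = a by ring, cosh_eq, sinh_eq,
      show s * (-1 - a) = -s + -(a * s) by ring, show s * (1 - a) = s + -(a * s) by ring,
      exp_add, exp_add]
    ring
  · norm_num

lemma exp_mul_le_cosh_add_sinh_div_mul {c y : ℝ} (hc : 0 < c) (hy : |y| ≤ c) (t : ℝ) :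
    exp (t * y) ≤ cosh (t * c) + sinh (t * c) / c * y := by
  obtain ⟨hy₁, hy₂⟩ := abs_le.mp hy
  have hconv := convexOn_exp.2 (Set.mem_univ (-(t * c))) (Set.mem_univ (t * c))
    (div_nonneg (sub_nonneg.2 hy₂) (by positivity) : 0 ≤ (c - y) / (2 * c))
    (div_nonneg (by linarith) (by positivity) : 0 ≤ (c + y) / (2 * c)) (by field_simp; ring)
  simp only [smul_eq_mul] at hconv
  refine (le_of_eq ?_).trans (hconv.trans_eq ?_)
  · congr 1; field_simp; ring
  · rw [cosh_eq, sinh_eq]; field_simp; ring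

section Martingale

variable {Ω : Type*} {m mΩ : MeasurableSpace Ω} {μ : Measure Ω}

lemma condExp_exp_mul_le_cosh_add_sinh_div_mul [IsFiniteMeasure μ] {Y Z : Ω → ℝ} {c : ℝ}
    (hm : m ≤ mΩ) (hc : 0 < c)
    (hY : AEStronglyMeasurable Y μ) (hYc : ∀ ω, |Y ω| ≤ c) (hYZ : μ[Y|m] =ᵐ[μ] Z) (t : ℝ) :
    μ[fun ω ↦ exp (t * Y ω)|m] ≤ᵐ[μ] fun ω ↦ cosh (t * c) + sinh (t * c) / c * Z ω := by
  have hYint : Integrable Y μ := (integrable_const c).mono' hY (.of_forall hYc)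
  have hmono : μ[fun ω ↦ exp (t * Y ω)|m]
      ≤ᵐ[μ] μ[(fun _ ↦ cosh (t * c)) + (sinh (t * c) / c) • Y|m] :=
    condExp_mono (integrable_exp_mul_of_mem_Icc hY.aemeasurable
        (.of_forall fun ω ↦ abs_le.mp (hYc ω)))
      ((integrable_const _).add (hYint.smul _))
      (.of_forall fun ω ↦ exp_mul_le_cosh_add_sinh_div_mul hc (hYc ω) t)
  filter_upwards [hmono, condExp_add (integrable_const _) (hYint.smul (sinh (t * c) / c)) m,
    condExp_smul (μ := μ) (sinh (t * c) / c) Y m, hYZ] with ω h1 h2 h3 h4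
  rwa [h2, Pi.add_apply, condExp_const hm, h3, Pi.smul_apply, h4, smul_eq_mul] at h1

lemma condExp_exp_mul_sub_le [IsFiniteMeasure μ] {Y Z : Ω → ℝ} {c : ℝ}
    (hm : m ≤ mΩ) (hc : 0 < c)
    (hY : AEStronglyMeasurable Y μ) (hZ : StronglyMeasurable[m] Z)
    (hYc : ∀ ω, |Y ω| ≤ c) (hZc : ∀ ω, |Z ω| ≤ c) (hYZ : μ[Y|m] =ᵐ[μ] Z) (t : ℝ) :
    μ[fun ω ↦ exp (t * (Y ω - Z ω))|m] ≤ᵐ[μ] fun _ ↦ exp (c ^ 2 * t ^ 2 / 2) := by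
  have hexpZ : StronglyMeasurable[m] fun ω ↦ exp (-(t * Z ω)) :=
    (continuous_exp.comp continuous_neg).comp_stronglyMeasurable (hZ.const_mul t)
  have hexpY : Integrable (fun ω ↦ exp (t * Y ω)) μ :=
    integrable_exp_mul_of_mem_Icc hY.aemeasurable (.of_forall fun ω ↦ abs_le.mp (hYc ω))
  have hsplit : (fun ω ↦ exp (t * (Y ω - Z ω)))
      = (fun ω ↦ exp (-(t * Z ω))) * fun ω ↦ exp (t * Y ω) := by
    ext ω; rw [Pi.mul_apply, ← exp_add]; ring_nf
  have hprod : Integrable (fun ω ↦ exp (t * (Y ω - Z ω))) μ :=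
    integrable_exp_mul_of_mem_Icc (hY.aemeasurable.sub (hZ.mono hm).measurable.aemeasurable)
      (.of_forall fun ω ↦ abs_le.mp ((abs_sub _ _).trans (add_le_add (hYc ω) (hZc ω))))
  rw [hsplit] at hprod ⊢
  filter_upwards [condExp_mul_of_stronglyMeasurable_left hexpZ hprod hexpY,
    condExp_exp_mul_le_cosh_add_sinh_div_mul hm hc hY hYc hYZ t] with ω h1 h2
  rw [h1, Pi.mul_apply]
  calc exp (-(t * Z ω)) * (μ[fun ω ↦ exp (t * Y ω)|m]) ω
      ≤ exp (-(t * Z ω)) * (cosh (t * c) + sinh (t * c) / c * Z ω) := by gcongr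
    _ = exp (-(Z ω / c * (t * c))) * (cosh (t * c) + Z ω / c * sinh (t * c)) := by
      field_simp
    _ ≤ exp (c ^ 2 * t ^ 2 / 2) := by
      convert exp_neg_mul_mul_cosh_add_mul_sinh_le _ (t * c) using 2
      · ring
      · rw [abs_div, abs_of_pos hc]; exact div_le_one_of_le₀ (hZc ω) hc.le

-- A variant of `HasSubgaussianMGF.add_of_hasCondSubgaussianMGF` that needs no standard Borel
-- structure on `Ω`, at the price of a bounded increment.
lemma ProbabilityTheory.HasSubgaussianMGF.add_of_condExp_exp_le [IsFiniteMeasure μ]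
    (hm : m ≤ mΩ)
    {M D : Ω → ℝ} {cM cD : ℝ≥0} {R : ℝ} (hM : HasSubgaussianMGF M cM μ)
    (hMm : StronglyMeasurable[m] M) (hD : AEStronglyMeasurable D μ) (hDR : ∀ ω, |D ω| ≤ R)
    (hcond : ∀ t, μ[fun ω ↦ exp (t * D ω)|m] ≤ᵐ[μ] fun _ ↦ exp (cD * t ^ 2 / 2)) :
    HasSubgaussianMGF (fun ω ↦ M ω + D ω) (cM + cD) μ := by
  have hsplit (t : ℝ) : (fun ω ↦ exp (t * (M ω + D ω)))
      = (fun ω ↦ exp (t * M ω)) * fun ω ↦ exp (t * D ω) := by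
    ext ω; rw [Pi.mul_apply, ← exp_add, mul_add]
  have hexpD (t : ℝ) : Integrable (fun ω ↦ exp (t * D ω)) μ :=
    integrable_exp_mul_of_mem_Icc hD.aemeasurable (.of_forall fun ω ↦ abs_le.mp (hDR ω))
  have hint (t : ℝ) : Integrable (fun ω ↦ exp (t * (M ω + D ω))) μ := by
    rw [hsplit]
    exact (hM.integrable_exp_mul t).mul_bdd (hexpD t).aestronglyMeasurable
      (.of_forall fun ω ↦ by
        rw [norm_of_nonneg (exp_nonneg _)]; exact exp_le_exp.2 ((le_abs_self _).trans
          ((abs_mul t (D ω)).trans_le (mul_le_mul_of_nonneg_left (hDR ω) (abs_nonneg t)))))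
  refine ⟨hint, fun t ↦ ?_⟩
  have hexpM : StronglyMeasurable[m] fun ω ↦ exp (t * M ω) :=
    continuous_exp.comp_stronglyMeasurable (hMm.const_mul t)
  have hpull := condExp_mul_of_stronglyMeasurable_left hexpM (hsplit t ▸ hint t) (hexpD t)
  calc mgf (fun ω ↦ M ω + D ω) μ t
      = ∫ ω, (μ[(fun ω ↦ exp (t * M ω)) * fun ω ↦ exp (t * D ω)|m]) ω ∂μ := by
        rw [mgf, hsplit, integral_condExp hm]
    _ = ∫ ω, exp (t * M ω) * (μ[fun ω ↦ exp (t * D ω)|m]) ω ∂μ := integral_congr_ae hpull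
    _ ≤ ∫ ω, exp (t * M ω) * exp (cD * t ^ 2 / 2) ∂μ := by
        refine integral_mono_ae ((integrable_condExp).congr hpull)
          ((hM.integrable_exp_mul t).mul_const _) ?_
        filter_upwards [hcond t] with ω hω
        exact mul_le_mul_of_nonneg_left hω (exp_nonneg _)
    _ = mgf M μ t * exp (cD * t ^ 2 / 2) := integral_mul_const _ _
    _ ≤ exp (cM * t ^ 2 / 2) * exp (cD * t ^ 2 / 2) := by
        gcongr; exact hM.mgf_le t
    _ = exp (↑(cM + cD) * t ^ 2 / 2) := by rw [← exp_add]; push_cast; ring_nf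

lemma hasSubgaussianMGF_sum_sub_of_condExp_eq [IsZeroOrProbabilityMeasure μ]
    (ℱ : Filtration ℕ mΩ)
    {Y Z : ℕ → Ω → ℝ} {c : ℝ≥0} (hc : 0 < c)
    (hY : ∀ k, StronglyMeasurable[ℱ (k + 1)] (Y k)) (hZ : ∀ k, StronglyMeasurable[ℱ k] (Z k))
    (hYc : ∀ k ω, |Y k ω| ≤ c) (hZc : ∀ k ω, |Z k ω| ≤ c)
    (hYZ : ∀ k, μ[Y k|ℱ k] =ᵐ[μ] Z k) (n : ℕ) :
    HasSubgaussianMGF (fun ω ↦ ∑ k ∈ Finset.range n, (Y k ω - Z k ω)) (n * c ^ 2) μ := by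
  induction n with
  | zero => simp
  | succ n ih =>
    have hsum : StronglyMeasurable[ℱ n] fun ω ↦ ∑ k ∈ Finset.range n, (Y k ω - Z k ω) :=
      Finset.stronglyMeasurable_fun_sum _ fun k hk ↦
        ((hY k).mono (ℱ.mono (Finset.mem_range.1 hk))).sub
          ((hZ k).mono (ℱ.mono (Finset.mem_range.1 hk).le))
    have hYm := ((hY n).mono (ℱ.le (n + 1))).aestronglyMeasurable (μ := μ)
    have hstep := ih.add_of_condExp_exp_le (cD := c ^ 2) (ℱ.le n) hsum
      (hYm.sub ((hZ n).mono (ℱ.le _)).aestronglyMeasurable)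
      (fun ω ↦ (abs_sub _ _).trans (add_le_add (hYc n ω) (hZc n ω)))
      (fun t ↦ by
        simpa using condExp_exp_mul_sub_le (ℱ.le n) hc hYm (hZ n) (hYc n) (hZc n) (hYZ n) t)
    convert hstep using 1
    · simp only [Finset.sum_range_succ, Pi.sub_apply]
    · push_cast; ring

lemma measureReal_lt_abs_le_of_abs_sub_le [IsFiniteMeasure μ] {S M : Ω → ℝ} {c : ℝ≥0}
    {r u : ℝ}
    (hM : HasSubgaussianMGF M c μ) (hSM : ∀ ω, |S ω - M ω| ≤ r) (hru : r ≤ u) :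
    μ.real {ω | u < |S ω|} ≤ 2 * exp (-(u - r) ^ 2 / (2 * c)) := by
  have hsub : {ω | u < |S ω|} ⊆ {ω | u - r ≤ M ω} ∪ {ω | u - r ≤ (-M) ω} := by
    intro ω hω
    have := abs_sub_abs_le_abs_sub (S ω) (M ω)
    rcases le_abs'.1 (show u - r ≤ |M ω| by linarith [hSM ω, hω.out]) with h | h
    · exact .inr (show u - r ≤ -M ω by linarith)
    · exact .inl h
  calc μ.real {ω | u < |S ω|} ≤ μ.real {ω | u - r ≤ M ω} + μ.real {ω | u - r ≤ (-M) ω} :=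
        (measureReal_mono hsub).trans (measureReal_union_le _ _)
    _ ≤ 2 * exp (-(u - r) ^ 2 / (2 * c)) := by
        linarith [hM.measure_ge_le (sub_nonneg.2 hru), hM.neg.measure_ge_le (sub_nonneg.2 hru)]

end Martingale

lemma abs_apply_le_of_forall_abs_le {X : Type*} [TopologicalSpace X]
    (P : C(X, ℝ) →ₗ[ℝ] C(X, ℝ)) (hPpos : ∀ h : C(X, ℝ), 0 ≤ h → 0 ≤ P h) (hP1 : P 1 = 1)
    {h : C(X, ℝ)} {C : ℝ} (hh : ∀ x, |h x| ≤ C) (x : X) : |P h x| ≤ C := by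
  have hup := hPpos (C • 1 - h) fun y ↦ by simpa using (abs_le.mp (hh y)).2
  have hlow := hPpos (C • 1 + h) fun y ↦ by
    simpa [neg_le_iff_add_nonneg'] using (abs_le.mp (hh y)).1
  rw [map_sub, map_smul, hP1] at hup
  rw [map_add, map_smul, hP1] at hlow
  have hupx : 0 ≤ (C • 1 - P h) x := hup x
  have hlowx : 0 ≤ (C • 1 + P h) x := hlow x
  simp only [ContinuousMap.sub_apply, ContinuousMap.add_apply, ContinuousMap.smul_apply,
    ContinuousMap.one_apply, smul_eq_mul, mul_one] at hupx hlowx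
  exact abs_le.mpr ⟨by linarith, by linarith⟩

lemma min_one_two_exp_le {n C ε : ℝ} (hn : 2 ≤ n) (hC : 0 < C) (hnε : 2 * C < n * ε) :
    min 1 (2 * exp (-(n * ε - 2 * C) ^ 2 / (2 * (n * C ^ 2)))) ≤
      2 * exp (-(n * ε ^ 2) / (8 * C ^ 2) + ε / (4 * C) - 1 / (2 * n)) := by
  set a := n * ε
  have hexp : -(n * ε ^ 2) / (8 * C ^ 2) + ε / (4 * C) - 1 / (2 * n)
      = -(a ^ 2 - 2 * a * C + 4 * C ^ 2) / (8 * n * C ^ 2) := by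
    simp only [a]; field_simp; ring
  rw [hexp]
  -- `4 (a - 2C)² ≥ a² - 2aC + 4C²` exactly when `3a² - 14aC + 12C² ≥ 0`
  rcases le_or_gt 0 (3 * a ^ 2 - 14 * a * C + 12 * C ^ 2) with hq | hq
  · refine (min_le_right _ _).trans (mul_le_mul_of_nonneg_left (exp_le_exp.2 ?_) two_pos.le)
    rw [div_le_div_iff₀ (by positivity) (by positivity)]
    nlinarith [mul_nonneg (by positivity : (0 : ℝ) ≤ n * C ^ 2) hq]
  · refine (min_le_left _ _).trans ?_
    have ha : a ≤ 3.6 * C := by nlinarith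
    have hlog : -log 2 ≤ -(a ^ 2 - 2 * a * C + 4 * C ^ 2) / (8 * n * C ^ 2) := by
      rw [le_div_iff₀ (by positivity)]
      nlinarith [log_two_gt_d9, mul_nonneg (sub_nonneg.2 hn) (sq_nonneg C)]
    calc (1 : ℝ) = 2 * exp (-log 2) := by rw [exp_neg, exp_log two_pos]; norm_num
      _ ≤ _ := by gcongr

theorem stmt6_general {X Ω : Type*} [MetricSpace X] [CompactSpace X] {mΩ : MeasurableSpace Ω}
    (ℙx : Measure Ω) [IsProbabilityMeasure ℙx]
    (ℱ : Filtration ℕ mΩ)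
    (Xc : ℕ → Ω → X)
    (hadapt : ∀ n, StronglyMeasurable[ℱ n] (Xc n))
    (P : C(X, ℝ) →ₗ[ℝ] C(X, ℝ))
    (hPpos : ∀ h : C(X, ℝ), 0 ≤ h → 0 ≤ P h) (hP1 : P 1 = 1)
    (f g : C(X, ℝ))
    (hfg : ∀ x, f x = g x - (P g) x)
    (C' : ℝ) (hC' : 0 < C') (hg : ‖g‖ ≤ C')
    (hMarkov : ∀ n, ℙx[fun ω => g (Xc (n + 1) ω)|ℱ n]
        =ᵐ[ℙx] fun ω => (P g) (Xc n ω)) :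
    ∀ ε : ℝ, 0 < ε → ∀ n : ℕ, 2 * C' < n * ε →
      ℙx {ω | (n : ℝ) * ε < |∑ k ∈ Finset.range n, f (Xc k ω)|} ≤
        ENNReal.ofReal (2 * Real.exp
          (-((n : ℝ) * ε ^ 2) / (8 * C' ^ 2) + ε / (4 * C') - 1 / (2 * n))) := by
  intro ε hε n hnε
  have hgC : ∀ x, |g x| ≤ C' := fun x ↦ (g.norm_coe_le_norm x).trans hg
  have hPgC := abs_apply_le_of_forall_abs_le P hPpos hP1 hgC
  rcases le_or_gt (2 * C') ε with hε₂ | hε₂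
  · suffices hempty : {ω | (n : ℝ) * ε < |∑ k ∈ Finset.range n, f (Xc k ω)|} = ∅ by
      simp [hempty]
    refine Set.eq_empty_of_forall_notMem fun ω hω ↦ hω.out.not_ge ?_
    calc |∑ k ∈ Finset.range n, f (Xc k ω)| ≤ ∑ k ∈ Finset.range n, 2 * C' :=
          (Finset.abs_sum_le_sum_abs _ _).trans <| Finset.sum_le_sum fun k _ ↦ by
            rw [hfg]; linarith [abs_sub (g (Xc k ω)) (P g (Xc k ω)), hgC (Xc k ω), hPgC (Xc k ω)]
      _ ≤ n * ε := by simpa using mul_le_mul_of_nonneg_left hε₂ n.cast_nonneg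
  have hn : (2 : ℝ) ≤ n := by
    have : (1 : ℝ) < n := lt_of_mul_lt_mul_right (by linarith) hε.le
    exact_mod_cast (show 1 < n by exact_mod_cast this)
  have hc : (C'.toNNReal : ℝ) = C' := Real.coe_toNNReal _ hC'.le
  have hM := hasSubgaussianMGF_sum_sub_of_condExp_eq ℱ (Real.toNNReal_pos.2 hC')
    (fun k ↦ (map_continuous g).comp_stronglyMeasurable (hadapt (k + 1)))
    (fun k ↦ (map_continuous (P g)).comp_stronglyMeasurable (hadapt k))
    (fun _ _ ↦ (hgC _).trans hc.ge) (fun _ _ ↦ (hPgC _).trans hc.ge) hMarkov n (μ := ℙx)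
  have hSM (ω : Ω) : |∑ k ∈ Finset.range n, f (Xc k ω)
      - ∑ k ∈ Finset.range n, (g (Xc (k + 1) ω) - P g (Xc k ω))| ≤ 2 * C' := by
    rw [← Finset.sum_sub_distrib]
    simp only [hfg, sub_sub_sub_cancel_right]
    rw [Finset.sum_range_sub']
    linarith [abs_sub (g (Xc 0 ω)) (g (Xc n ω)), hgC (Xc 0 ω), hgC (Xc n ω)]
  rw [← ofReal_measureReal]
  refine ENNReal.ofReal_le_ofReal ((le_min measureReal_le_one
    (measureReal_lt_abs_le_of_abs_sub_le hM hSM hnε.le)).trans ?_)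
  simpa [hc] using min_one_two_exp_le hn hC' hnε

/-- Non-concentration inequality: if `f = g - Pg` with `‖g‖_∞ ≤ C'` and `∫ f dν = 0`,
then for the Markov chain started at `x`, `P_x(|S_n f| > nε)` is bounded by
`2 exp(-nε²/(8C'²) + ε/(4C') - 1/(2n))` whenever `nε > 2C'` (Azuma–Hoeffding). -/
theorem stmt6 {X Ω : Type*} [MetricSpace X] [CompactSpace X] [MeasurableSpace X]
    [BorelSpace X] {mΩ : MeasurableSpace Ω}
    (ℙx : Measure Ω) [IsProbabilityMeasure ℙx]
    (ℱ : Filtration ℕ mΩ)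
    (Xc : ℕ → Ω → X)
    (hadapt : ∀ n, StronglyMeasurable[ℱ n] (Xc n))
    (P : C(X, ℝ) →ₗ[ℝ] C(X, ℝ))
    (hPpos : ∀ h : C(X, ℝ), 0 ≤ h → 0 ≤ P h) (hP1 : P 1 = 1)
    (ν : Measure X) [IsProbabilityMeasure ν]
    (hν : ∀ h : C(X, ℝ), ∫ x, (P h) x ∂ν = ∫ x, h x ∂ν)
    (f g : C(X, ℝ)) (hfν : ∫ x, f x ∂ν = 0)
    (hfg : ∀ x, f x = g x - (P g) x)
    (C' : ℝ) (hC' : 0 < C') (hg : ‖g‖ ≤ C')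
    (hMarkov : ∀ n, ℙx[fun ω => g (Xc (n + 1) ω)|ℱ n]
        =ᵐ[ℙx] fun ω => (P g) (Xc n ω)) :
    ∀ ε : ℝ, 0 < ε → ∀ n : ℕ, 2 * C' < n * ε →
      ℙx {ω | (n : ℝ) * ε < |∑ k ∈ Finset.range n, f (Xc k ω)|} ≤
        ENNReal.ofReal (2 * Real.exp
          (-((n : ℝ) * ε ^ 2) / (8 * C' ^ 2) + ε / (4 * C') - 1 / (2 * n))) :=
  stmt6_general ℙx ℱ Xc hadapt P hPpos hP1 f g hfg C' hC' hg hMarkov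
end

section
/- Let B ⊂ T^d be finite and F ⊂ T^1 the set of all coordinates of elements of B. If F is (C,L)-diophantine, then with C' = C/(d|B|)^L, for any nonzero family (M_b) ∈ M_d(Z)^B: d(Σ_b M_b b, 0) ≤ C'/(max_b ‖M_b‖)^L implies Σ_b M_b b = 0. Conversely, if such a C' exists for matrix families with exponent L, then F is (C'/d^L, L)-diophantine. -/
open MeasureTheory

noncomputable section

/-- The torus `T^d = R^d / Z^d`. -/
abbrev Td (d : ℕ) := Fin d → AddCircle (1 : ℝ)

/-- Linear action of an integer matrix on the torus. -/
def matApply {d : ℕ} (A : Matrix (Fin d) (Fin d) ℤ) (x : Td d) : Td d :=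
  fun i => ∑ j, A i j • x j

/-- The sup of the absolute values of the entries of an integer matrix. -/
def mnorm {d : ℕ} (A : Matrix (Fin d) (Fin d) ℤ) : ℕ :=
  Finset.univ.sup fun i => Finset.univ.sup fun j => (A i j).natAbs

/-- A finite subset `F ⊂ T^1` is `(C, L)`-diophantine: any nonzero integer family
`(L_f)` supported on `F` with `d(∑ L_f f, 0) ≤ C / (max |L_f|)^L` satisfies `∑ L_f f = 0`. -/
def IsDioph (C L : ℝ) (F : Finset (AddCircle (1 : ℝ))) : Prop :=
  ∀ Lf : AddCircle (1 : ℝ) → ℤ, (∀ f ∉ F, Lf f = 0) → (∃ f ∈ F, Lf f ≠ 0) →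
    dist (∑ f ∈ F, Lf f • f) (0 : AddCircle (1 : ℝ)) ≤
        C / ((F.sup fun f => (Lf f).natAbs : ℕ) : ℝ) ^ L →
    ∑ f ∈ F, Lf f • f = 0

/-- The matrix version of the diophantine property for a finite `B ⊂ T^d`: any nonzero
family of integer matrices `(M_b)` supported on `B` with `d(∑ M_b b, 0) ≤ C / (max ‖M_b‖)^L`
satisfies `∑ M_b b = 0`. -/
def MatDioph (d : ℕ) (C L : ℝ) (B : Finset (Td d)) : Prop :=
  ∀ M : Td d → Matrix (Fin d) (Fin d) ℤ, (∀ b ∉ B, M b = 0) → (∃ b ∈ B, M b ≠ 0) →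
    dist (∑ b ∈ B, matApply (M b) b) (0 : Td d) ≤
        C / ((B.sup fun b => mnorm (M b) : ℕ) : ℝ) ^ L →
    ∑ b ∈ B, matApply (M b) b = 0

/-!
Each coordinate of `∑ M_b b` is an integer combination `∑ c_f f` of points of `F`, where `c_f`
collects the entries `M_b i j` over the pairs with `b j = f`, so `|c_f| ≤ d |B| max ‖M_b‖`.
Conversely `∑ L_f f` is a coordinate of `∑ M_b b` for the family that places `L_f` in one fixed
row at a single chosen position `(b, j)` with `b j = f`, so `max ‖M_b‖ ≤ max |L_f|`. Since
`N ↦ C / N ^ L` is antitone for `C, L ≥ 0`, the diophantine bounds transfer in both directions.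
If `C ≤ 0` both properties are trivial, and if `L < 0` each of them forces all points to vanish:
`C / n ^ L → ∞`, so testing `n • f` for all large `n` gives `n • f = (n + 1) • f = 0`.
-/

open Finset Filter

lemma eventually_one_le_div_rpow {C L : ℝ} (hC : 0 < C) (hL : L < 0) :
    ∀ᶠ n : ℕ in atTop, 1 ≤ C / (n : ℝ) ^ L := by
  have hlim : Tendsto (fun n : ℕ => C * (n : ℝ) ^ (-L)) atTop atTop :=
    ((tendsto_rpow_atTop (neg_pos.mpr hL)).comp tendsto_natCast_atTop_atTop).const_mul_atTop hC
  filter_upwards [hlim.eventually_ge_atTop 1] with n hn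
  rwa [div_eq_mul_inv, ← Real.rpow_neg n.cast_nonneg]

lemma eq_zero_of_eventually_zsmul_eq_zero {G : Type*} [AddGroup G] {x : G}
    (h : ∀ᶠ n : ℕ in atTop, (n : ℤ) • x = 0) : x = 0 := by
  obtain ⟨n, hn⟩ := eventually_atTop.mp h
  have hsucc := hn (n + 1) n.le_succ
  rwa [Nat.cast_succ, add_zsmul, hn n le_rfl, zero_add, one_zsmul] at hsucc

lemma div_rpow_div_rpow_le {C L : ℝ} (hC : 0 ≤ C) (hL : 0 ≤ L) {a b n : ℕ} (hn : 0 < n)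
    (h : n ≤ a * b) : C / (a : ℝ) ^ L / (b : ℝ) ^ L ≤ C / (n : ℝ) ^ L := by
  rw [div_div, ← Real.mul_rpow a.cast_nonneg b.cast_nonneg]
  exact div_le_div_of_nonneg_left hC (by positivity)
    (Real.rpow_le_rpow (by positivity) (by exact_mod_cast h) hL)

lemma eq_of_dist_le_div_rpow_div_rpow_of_nonpos {X : Type*} [MetricSpace X] {x y : X}
    {C L : ℝ} (hC : C ≤ 0) {a b : ℕ} (h : dist x y ≤ C / (a : ℝ) ^ L / (b : ℝ) ^ L) :
    x = y :=
  dist_le_zero.mp <| h.trans <| div_nonpos_of_nonpos_of_nonneg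
    (div_nonpos_of_nonpos_of_nonneg hC (by positivity)) (by positivity)

lemma addCircle_norm_le_half (x : AddCircle (1 : ℝ)) : ‖x‖ ≤ 1 / 2 := by
  simpa using AddCircle.norm_le_half_period 1 one_ne_zero (x := x)

lemma torus_norm_le_half {d : ℕ} (x : Td d) : ‖x‖ ≤ 1 / 2 :=
  (pi_norm_le_iff_of_nonneg (by norm_num)).mpr fun i => addCircle_norm_le_half (x i)

section Matrices

variable {d : ℕ}

lemma natAbs_le_mnorm (A : Matrix (Fin d) (Fin d) ℤ) (i j : Fin d) :
    (A i j).natAbs ≤ mnorm A :=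
  le_sup_of_le (mem_univ i) (le_sup (f := fun j => (A i j).natAbs) (mem_univ j))

lemma mnorm_le {A : Matrix (Fin d) (Fin d) ℤ} {n : ℕ} (h : ∀ i j, (A i j).natAbs ≤ n) :
    mnorm A ≤ n :=
  Finset.sup_le fun i _ => Finset.sup_le fun j _ => h i j

lemma mnorm_diagonal_const [NeZero d] (n : ℤ) :
    mnorm (Matrix.diagonal fun _ : Fin d => n) = n.natAbs :=
  le_antisymm (mnorm_le fun i j => by rw [Matrix.diagonal_apply]; split_ifs <;> simp)
    (by simpa using natAbs_le_mnorm (Matrix.diagonal fun _ : Fin d => n) 0 0)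

lemma matApply_diagonal_const (n : ℤ) (x : Td d) :
    matApply (Matrix.diagonal fun _ => n) x = n • x := by
  funext i
  simp [matApply, Matrix.diagonal_apply]

lemma mnorm_zero : mnorm (0 : Matrix (Fin d) (Fin d) ℤ) = 0 := by
  simp [mnorm]

lemma matApply_zero_left (x : Td d) : matApply 0 x = 0 := by
  funext i
  simp [matApply]

lemma matApply_zero_right (A : Matrix (Fin d) (Fin d) ℤ) : matApply A 0 = 0 := by
  funext i
  simp [matApply]

lemma sum_matApply_apply (B : Finset (Td d)) (M : Td d → Matrix (Fin d) (Fin d) ℤ) (i : Fin d) :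
    (∑ b ∈ B, matApply (M b) b) i = ∑ p ∈ B ×ˢ univ, M p.1 i p.2 • p.1 p.2 := by
  rw [Finset.sum_apply, sum_product]
  rfl

lemma sum_matApply_single_row (B : Finset (Td d)) (i₀ : Fin d) (e : Td d × Fin d → ℤ) :
    ∑ b ∈ B, matApply (Matrix.of (Pi.single i₀ fun j => e (b, j))) b =
      Pi.single i₀ (∑ p ∈ B ×ˢ univ, e p • p.1 p.2) := by
  funext i
  rw [sum_matApply_apply]
  by_cases hi : i = i₀
  · subst hi
    simp
  · simp [hi]

open Classical in
def rowCoeff (B : Finset (Td d)) (M : Td d → Matrix (Fin d) (Fin d) ℤ) (i : Fin d)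
    (f : AddCircle (1 : ℝ)) : ℤ :=
  ∑ p ∈ B ×ˢ univ with p.1 p.2 = f, M p.1 i p.2

variable {B : Finset (Td d)} {F : Finset (AddCircle (1 : ℝ))}

lemma sum_rowCoeff_smul (hF : ∀ b ∈ B, ∀ j, b j ∈ F) (M : Td d → Matrix (Fin d) (Fin d) ℤ)
    (i : Fin d) : ∑ f ∈ F, rowCoeff B M i f • f = (∑ b ∈ B, matApply (M b) b) i := by
  classical
  rw [sum_matApply_apply, ← sum_fiberwise_of_maps_to (g := fun p : Td d × Fin d => p.1 p.2)
    (t := F) fun p hp => hF p.1 (mem_product.mp hp).1 p.2]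
  refine sum_congr rfl fun f _ => ?_
  rw [rowCoeff, sum_smul]
  exact sum_congr rfl fun p hp => by rw [(mem_filter.mp hp).2]

lemma rowCoeff_eq_zero (hF : ∀ b ∈ B, ∀ j, b j ∈ F) (M : Td d → Matrix (Fin d) (Fin d) ℤ)
    (i : Fin d) {f : AddCircle (1 : ℝ)} (hf : f ∉ F) : rowCoeff B M i f = 0 :=
  sum_eq_zero fun p hp => by
    obtain ⟨hpB, hpf⟩ := mem_filter.mp hp
    exact absurd (hpf ▸ hF p.1 (mem_product.mp hpB).1 p.2) hf

lemma natAbs_rowCoeff_le (M : Td d → Matrix (Fin d) (Fin d) ℤ) (i : Fin d)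
    (f : AddCircle (1 : ℝ)) :
    (rowCoeff B M i f).natAbs ≤ d * #B * B.sup fun b => mnorm (M b) :=
  calc (rowCoeff B M i f).natAbs
      ≤ ∑ p ∈ B ×ˢ univ with p.1 p.2 = f, (M p.1 i p.2).natAbs := Int.natAbs_sum_le _ _
    _ ≤ ∑ p ∈ B ×ˢ univ, (M p.1 i p.2).natAbs := sum_le_sum_of_subset (filter_subset _ _)
    _ ≤ #(B ×ˢ univ) • B.sup fun b => mnorm (M b) :=
        sum_le_card_nsmul _ _ _ fun p hp =>
          (natAbs_le_mnorm _ _ _).trans (le_sup (f := fun b => mnorm (M b)) (mem_product.mp hp).1)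
    _ = d * #B * B.sup fun b => mnorm (M b) := by
        rw [card_product, card_univ, Fintype.card_fin, smul_eq_mul, mul_comm #B]

lemma exists_single_row_family (hF : ∀ f ∈ F, ∃ b ∈ B, ∃ j, b j = f)
    (c : AddCircle (1 : ℝ) → ℤ) (i₀ : Fin d) :
    ∃ M : Td d → Matrix (Fin d) (Fin d) ℤ, (∀ b ∉ B, M b = 0) ∧
      (∀ b, mnorm (M b) ≤ F.sup fun f => (c f).natAbs) ∧
      (∀ f ∈ F, ∃ b ∈ B, ∃ j, M b i₀ j = c f) ∧
      ∑ b ∈ B, matApply (M b) b = Pi.single i₀ (∑ f ∈ F, c f • f) := by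
  classical
  have hrep : ∀ f ∈ F, ∃ p ∈ B ×ˢ univ, p.1 p.2 = f := fun f hf => by
    obtain ⟨b, hb, j, hbj⟩ := hF f hf
    exact ⟨(b, j), mem_product.mpr ⟨hb, mem_univ j⟩, hbj⟩
  have : Nonempty (Fin d) := ⟨i₀⟩
  choose! r hrB hr using hrep
  -- `r` picks one representative `(b, j)` of each `f ∈ F`, so no point of `F` is counted twice.
  have hr_inj : Set.InjOn r F := fun f hf g hg hfg => by rw [← hr f hf, ← hr g hg, hfg]
  set e : Td d × Fin d → ℤ := fun p => if p ∈ F.image r then c (p.1 p.2) else 0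
  have he_rep : ∀ f ∈ F, e (r f) = c f := fun f hf => by
    simp only [e, if_pos (mem_image_of_mem r hf), hr f hf]
  have he_le : ∀ p, (e p).natAbs ≤ F.sup fun f => (c f).natAbs := fun p => by
    by_cases hp : p ∈ F.image r
    · obtain ⟨f, hf, rfl⟩ := mem_image.mp hp
      exact he_rep f hf ▸ le_sup (f := fun f => (c f).natAbs) hf
    · simp only [e, if_neg hp, Int.natAbs_zero, zero_le]
  have he_zero : ∀ p, p.1 ∉ B → e p = 0 := fun p hp => if_neg fun hpr => by
    obtain ⟨f, hf, rfl⟩ := mem_image.mp hpr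
    exact hp (mem_product.mp (hrB f hf)).1
  refine ⟨fun b => Matrix.of (Pi.single i₀ fun j => e (b, j)), fun b hb => ?_,
    fun b => mnorm_le fun i j => ?_,
    fun f hf => ⟨(r f).1, (mem_product.mp (hrB f hf)).1, (r f).2, by simpa using he_rep f hf⟩,
    ?_⟩
  · ext i j
    by_cases hi : i = i₀
    · subst hi
      simpa using he_zero (b, j) hb
    · simp [hi]
  · show (Pi.single (M := fun _ => Fin d → ℤ) i₀ (fun j => e (b, j)) i j).natAbs ≤ _
    rw [Pi.single_apply]
    split_ifs with hi
    · subst hi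
      exact he_le (b, j)
    · simp
  · rw [sum_matApply_single_row]
    congr 1
    simp_rw [e, ite_smul, zero_smul]
    rw [sum_ite_mem, inter_eq_right.mpr (image_subset_iff.mpr hrB), sum_image hr_inj]
    exact sum_congr rfl fun f hf => by rw [hr f hf]

end Matrices

section Dioph

variable {C L : ℝ}

lemma IsDioph.zsmul_eq_zero {F : Finset (AddCircle (1 : ℝ))} (h : IsDioph C L F)
    {f : AddCircle (1 : ℝ)} (hf : f ∈ F) {n : ℤ} (hn : n ≠ 0)
    (hdist : dist (n • f) 0 ≤ C / (n.natAbs : ℝ) ^ L) : n • f = 0 := by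
  classical
  set c : AddCircle (1 : ℝ) → ℤ := Pi.single f n
  have hsum : ∑ g ∈ F, c g • g = n • f :=
    (sum_eq_single_of_mem f hf fun g _ hg => by simp [c, hg]).trans (by simp [c])
  have hsup : (F.sup fun g => (c g).natAbs) = n.natAbs :=
    le_antisymm (Finset.sup_le fun g _ => by by_cases hg : g = f <;> simp [c, hg])
      (le_sup_of_le hf (by simp [c]))
  rw [← hsum]
  exact h c (fun g hg => by simp [c, (ne_of_mem_of_not_mem hf hg).symm])
    ⟨f, hf, by simpa [c] using hn⟩ (by rwa [hsum, hsup])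

lemma IsDioph.eq_zero_of_neg {F : Finset (AddCircle (1 : ℝ))} (h : IsDioph C L F)
    (hC : 0 < C) (hL : L < 0) {f : AddCircle (1 : ℝ)} (hf : f ∈ F) : f = 0 := by
  refine eq_zero_of_eventually_zsmul_eq_zero ?_
  filter_upwards [eventually_one_le_div_rpow hC hL, eventually_gt_atTop 0] with n hbound hn
  refine h.zsmul_eq_zero hf (by exact_mod_cast hn.ne') ?_
  rw [dist_zero_right, Int.natAbs_natCast]
  linarith [addCircle_norm_le_half ((n : ℤ) • f)]

lemma MatDioph.zsmul_eq_zero {d : ℕ} [NeZero d] {B : Finset (Td d)} (h : MatDioph d C L B)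
    {b : Td d} (hb : b ∈ B) {n : ℤ} (hn : n ≠ 0)
    (hdist : dist (n • b) 0 ≤ C / (n.natAbs : ℝ) ^ L) : n • b = 0 := by
  classical
  set D : Matrix (Fin d) (Fin d) ℤ := Matrix.diagonal fun _ => n
  set M : Td d → Matrix (Fin d) (Fin d) ℤ := Pi.single b D
  have hsum : ∑ b' ∈ B, matApply (M b') b' = n • b :=
    (sum_eq_single_of_mem b hb fun b' _ hb' => by simp [M, hb', matApply_zero_left]).trans
      (by simp [M, D, matApply_diagonal_const])
  have hsup : (B.sup fun b' => mnorm (M b')) = n.natAbs :=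
    le_antisymm
      (Finset.sup_le fun b' _ => by
        by_cases hb' : b' = b
        · simp [M, hb', D, mnorm_diagonal_const]
        · simp [M, hb', mnorm_zero])
      (le_sup_of_le hb (by simp [M, D, mnorm_diagonal_const]))
  rw [← hsum]
  refine h M (fun b' hb' => by simp [M, (ne_of_mem_of_not_mem hb hb').symm])
    ⟨b, hb, fun hM => hn ?_⟩ (by rwa [hsum, hsup])
  simpa [M, D] using congrFun (congrFun hM 0) 0

lemma MatDioph.eq_zero_of_neg {d : ℕ} {B : Finset (Td d)} (h : MatDioph d C L B)
    (hC : 0 < C) (hL : L < 0) {b : Td d} (hb : b ∈ B) : b = 0 := by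
  rcases d with _ | d
  · exact Subsingleton.elim _ _
  refine eq_zero_of_eventually_zsmul_eq_zero ?_
  filter_upwards [eventually_one_le_div_rpow hC hL, eventually_gt_atTop 0] with n hbound hn
  refine h.zsmul_eq_zero hb (by exact_mod_cast hn.ne') ?_
  rw [dist_zero_right, Int.natAbs_natCast]
  linarith [torus_norm_le_half ((n : ℤ) • b)]

end Dioph

section Transfer

variable {d : ℕ} {C L : ℝ} {B : Finset (Td d)} {F : Finset (AddCircle (1 : ℝ))}

theorem IsDioph.matDioph (hF : ∀ b ∈ B, ∀ j, b j ∈ F) (h : IsDioph C L F) :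
    MatDioph d (C / ((d * #B : ℕ) : ℝ) ^ L) L B := by
  intro M _ _ hdist
  rcases le_or_gt C 0 with hC | hC
  · exact eq_of_dist_le_div_rpow_div_rpow_of_nonpos hC hdist
  rcases lt_or_ge L 0 with hL | hL
  · refine sum_eq_zero fun b hb => ?_
    rw [show b = 0 from funext fun j => h.eq_zero_of_neg hC hL (hF b hb j), matApply_zero_right]
  funext i
  rw [Pi.zero_apply, ← sum_rowCoeff_smul hF]
  by_cases hz : ∀ f ∈ F, rowCoeff B M i f = 0
  · exact sum_eq_zero fun f hf => by rw [hz f hf, zero_smul]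
  obtain ⟨f, hf, hf0⟩ : ∃ f ∈ F, rowCoeff B M i f ≠ 0 := by simpa using hz
  refine h _ (fun f hf => rowCoeff_eq_zero hF M i hf) ⟨f, hf, hf0⟩ ?_
  calc dist (∑ f ∈ F, rowCoeff B M i f • f) 0
      ≤ dist (∑ b ∈ B, matApply (M b) b) 0 := by
        rw [sum_rowCoeff_smul hF]
        exact dist_le_pi_dist _ 0 i
    _ ≤ _ := hdist
    _ ≤ _ := div_rpow_div_rpow_le hC.le hL
        (Finset.lt_sup_iff.mpr ⟨f, hf, Int.natAbs_pos.mpr hf0⟩)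
        (Finset.sup_le fun f _ => natAbs_rowCoeff_le M i f)

theorem MatDioph.isDioph (hF : ∀ f ∈ F, ∃ b ∈ B, ∃ j, b j = f) (h : MatDioph d C L B) :
    IsDioph (C / (d : ℝ) ^ L) L F := by
  intro c _ ⟨f₀, hf₀, hc₀⟩ hdist
  rcases le_or_gt C 0 with hC | hC
  · exact eq_of_dist_le_div_rpow_div_rpow_of_nonpos hC hdist
  rcases lt_or_ge L 0 with hL | hL
  · refine sum_eq_zero fun f hf => ?_
    obtain ⟨b, hb, j, rfl⟩ := hF f hf
    rw [h.eq_zero_of_neg hC hL hb, Pi.zero_apply, smul_zero]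
  obtain ⟨-, -, i₀, -⟩ := hF f₀ hf₀
  obtain ⟨M, hMB, hMnorm, hMc, hMsum⟩ := exists_single_row_family hF c i₀
  obtain ⟨b₀, hb₀, j₀, hM₀⟩ := hMc f₀ hf₀
  have hpos : 0 < B.sup fun b => mnorm (M b) :=
    Finset.lt_sup_iff.mpr
      ⟨b₀, hb₀, (Int.natAbs_pos.mpr (hM₀ ▸ hc₀)).trans_le (natAbs_le_mnorm _ _ _)⟩
  have hnorm : (B.sup fun b => mnorm (M b)) ≤ d * F.sup fun f => (c f).natAbs :=
    (Finset.sup_le fun b _ => hMnorm b).trans (Nat.le_mul_of_pos_left _ i₀.pos)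
  have hzero := h M hMB ⟨b₀, hb₀, fun hb => hc₀ (by rw [← hM₀, hb]; rfl)⟩ (by
    rw [hMsum, dist_zero_right, Pi.norm_single, ← dist_zero_right]
    exact hdist.trans (div_rpow_div_rpow_le hC.le hL hpos hnorm))
  rwa [hMsum, Pi.single_eq_zero_iff] at hzero

end Transfer

/-- Equivalence between the diophantine property of the set `F` of coordinates of a finite
`B ⊂ T^d` and the matrix diophantine property of `B`: if `F` is `(C, L)`-diophantine then
`B` satisfies the matrix property with constant `C / (d|B|)^L`; conversely if `B` satisfies
the matrix property with constant `C'` then `F` is `(C'/d^L, L)`-diophantine. -/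
theorem stmt11 (d : ℕ) (C L : ℝ) (B : Finset (Td d)) (F : Finset (AddCircle (1 : ℝ)))
    (hF : F = B.biUnion fun b => Finset.image b Finset.univ) :
    (IsDioph C L F → MatDioph d (C / ((d * B.card : ℕ) : ℝ) ^ L) L B) ∧
      ∀ C' : ℝ, MatDioph d C' L B → IsDioph (C' / (d : ℝ) ^ L) L F := by
  subst hF
  refine ⟨IsDioph.matDioph fun b hb j => ?_, fun C' => MatDioph.isDioph fun f hf => ?_⟩
  · exact mem_biUnion.mpr ⟨b, hb, mem_image_of_mem b (mem_univ j)⟩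
  · obtain ⟨b, hb, hf⟩ := mem_biUnion.mp hf
    obtain ⟨j, -, rfl⟩ := mem_image.mp hf
    exact ⟨b, hb, j, rfl⟩

end
end

section
/- Let μ be a probability measure on SL_d(Z) ⋉ T^d and suppose there exist α ∈ (0,1], C, t > 0 such that for every α-Hölder f and all n, sup_x |P^n f(x) − ∫ f dν| ≤ C e^{-tn} ‖f‖_α, where ν is Lebesgue measure on T^d. If μ = (1/2)δ_{(a,0)} + (1/2)δ_{(b,v)} with a,b ∈ SL_d(Z) and v ∈ T^d, then there exist C_0, L > 0 such that for every rational point p/q ∈ Q^d/Z^d, d(v, p/q) ≥ C_0/q^L. -/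
/-!
Let `S` be the `q`-torsion `(1/q)ℤ^d/ℤ^d` of the torus; it contains `w = p/q`, is invariant under
`x ↦ a x` and under `x ↦ b x + w`. Both maps of the random walk therefore move the distance to `S`
by at most `d(x, S) ↦ M d(x, S) + d(v, w)`, where `M` bounds the Lipschitz constants of `a` and
`b`. For the test function `f = 1 - min(1, (4q d(x, S))^α)`, whose Hölder norm is at most
`1 + (4q)^α`, this gives `P^n f(0) ≥ 1 - (4q M^n d(v, w))^α`, while `∫ f ≤ 2^{-d} ≤ 1/2` because
`f` vanishes off the `1/(4q)`-neighbourhood of the `q^d` points of `S`. Taking `n ≈ log q / t`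
makes the mixing error at most `1/4`, so `(4q M^n d(v, w))^α ≥ 1/4`, and `M^n` is polynomial in `q`.
-/
open MeasureTheory

noncomputable section

instance : Fact ((0 : ℝ) < 1) := ⟨one_pos⟩

instance {d : ℕ} : MeasurableSpace (Matrix (Fin d) (Fin d) ℤ) :=
  inferInstanceAs (MeasurableSpace (Fin d → Fin d → ℤ))

instance {d : ℕ} : MeasurableSpace (Matrix.SpecialLinearGroup (Fin d) ℤ) :=
  inferInstanceAs (MeasurableSpace {A : Matrix (Fin d) (Fin d) ℤ // A.det = 1})

abbrev SLZ (d : ℕ) := Matrix.SpecialLinearGroup (Fin d) ℤ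

/-- Affine action of `SL_d(Z) ⋉ T^d` on the torus: `x ↦ a x + b`. -/
def actT {d : ℕ} (g : SLZ d × Td d) (x : Td d) : Td d := matApply g.1.1 x + g.2

open Metric Set
open scoped ENNReal NNReal

theorem le_iterate_of_average {X : Type*} {P : (X → ℝ) → X → ℝ} {T₁ T₂ : X → X}
    (hP : ∀ g x, P g x = 2⁻¹ * g (T₁ x) + 2⁻¹ * g (T₂ x)) {D : X → ℝ} {h : ℝ → ℝ}
    (hh : Monotone h) (hT₁ : ∀ x, D (T₁ x) ≤ h (D x)) (hT₂ : ∀ x, D (T₂ x) ≤ h (D x))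
    {ψ : ℝ → ℝ} {f : X → ℝ} (hf : ∀ x η, D x ≤ η → ψ η ≤ f x) (n : ℕ) :
    ∀ x η, D x ≤ η → ψ (h^[n] η) ≤ P^[n] f x := by
  induction n with
  | zero => exact hf
  | succ n ih =>
    intro x η hx
    have h₁ := ih (T₁ x) (h η) ((hT₁ x).trans (hh hx))
    have h₂ := ih (T₂ x) (h η) ((hT₂ x).trans (hh hx))
    rw [Function.iterate_succ_apply, Function.iterate_succ_apply', hP]
    linarith

-- `2 ≤ M` is what makes the geometric sum `∑_{k<n} M ^ k` at most `M ^ n`.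
theorem iterate_affine_zero_mem_Icc {M ε : ℝ} (hM : 2 ≤ M) (hε : 0 ≤ ε) (n : ℕ) :
    (fun y => M * y + ε)^[n] 0 ∈ Icc 0 (M ^ n * ε) := by
  suffices h : 0 ≤ (fun y => M * y + ε)^[n] 0 ∧ (fun y => M * y + ε)^[n] 0 + ε ≤ M ^ n * ε from
    ⟨h.1, by linarith [h.2]⟩
  induction n with
  | zero => simp
  | succ n ih =>
    rw [Function.iterate_succ_apply', pow_succ]
    constructor <;> nlinarith [ih.1, ih.2]

theorem abs_rpow_sub_rpow_le {x y p : ℝ} (hx : 0 ≤ x) (hy : 0 ≤ y) (hp : 0 ≤ p)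
    (hp1 : p ≤ 1) : |x ^ p - y ^ p| ≤ |x - y| ^ p := by
  wlog hyx : y ≤ x generalizing x y
  · rw [abs_sub_comm, abs_sub_comm x]
    exact this hy hx (le_of_not_ge hyx)
  have hsub : x ^ p ≤ (x - y) ^ p + y ^ p := by
    simpa using Real.rpow_add_le_add_rpow (sub_nonneg.2 hyx) hy hp hp1
  rw [abs_of_nonneg (sub_nonneg.2 (Real.rpow_le_rpow hy hyx hp)), abs_of_nonneg (sub_nonneg.2 hyx)]
  linarith

theorem LipschitzWith.infDist_le_mul_infDist {X Y : Type*} [PseudoMetricSpace X]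
    [PseudoMetricSpace Y] {T : X → Y} {K : ℝ≥0} (hT : LipschitzWith K T) {S : Set X}
    {S' : Set Y} (hS : S.Nonempty) (hST : MapsTo T S S') (x : X) :
    infDist (T x) S' ≤ K * infDist x S := by
  have : Nonempty S := hS.to_subtype
  rw [infDist_eq_iInf (s := S), Real.mul_iInf_of_nonneg K.coe_nonneg]
  exact le_ciInf fun s => (infDist_le_dist_of_mem (hST s.2)).trans (hT.dist_le_mul x s)

theorem integral_smul_dirac_add_smul_dirac {α : Type*} [MeasurableSpace α]
    [MeasurableSingletonClass α] (F : α → ℝ) {r s : ℝ≥0∞} (hr : r ≠ ∞) (hs : s ≠ ∞) (y z : α) :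
    ∫ g, F g ∂(r • Measure.dirac y + s • Measure.dirac z) = r.toReal * F y + s.toReal * F z := by
  rw [integral_add_measure ((integrable_dirac enorm_lt_top).smul_measure hr)
    ((integrable_dirac enorm_lt_top).smul_measure hs), integral_smul_measure,
    integral_smul_measure, integral_dirac, integral_dirac, smul_eq_mul, smul_eq_mul]

theorem exists_nat_le_exp_and_pow_le {t y M : ℝ} (ht : 0 < t) (hy : 1 ≤ y) (hM : 1 ≤ M) :
    ∃ n : ℕ, y ≤ Real.exp (t * n) ∧ M ^ n ≤ (Real.exp t * y) ^ (Real.log M / t) := by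
  set n := ⌈Real.log y / t⌉₊
  have hlog : 0 ≤ Real.log y := Real.log_nonneg hy
  have hlow : Real.log y ≤ t * n := (div_le_iff₀' ht).1 (Nat.le_ceil _)
  have hup : t * n ≤ t + Real.log y := by
    have := mul_lt_mul_of_pos_left (Nat.ceil_lt_add_one (div_nonneg hlog ht.le)) ht
    rw [mul_add, mul_div_cancel₀ _ ht.ne', mul_one] at this
    linarith
  refine ⟨n, ?_, ?_⟩
  · calc y = Real.exp (Real.log y) := (Real.exp_log (by linarith)).symm
      _ ≤ Real.exp (t * n) := Real.exp_le_exp.2 hlow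
  · calc M ^ n = Real.exp (t * n) ^ (Real.log M / t) := by
          rw [← Real.exp_mul, mul_div_assoc', mul_div_right_comm, mul_div_cancel_left₀ _ ht.ne',
            Real.exp_nat_mul, Real.exp_log (by linarith)]
      _ ≤ (Real.exp t * y) ^ (Real.log M / t) := by
          refine Real.rpow_le_rpow (Real.exp_pos _).le ?_ (div_nonneg (Real.log_nonneg hM) ht.le)
          rw [← Real.exp_log (by linarith : 0 < y), ← Real.exp_add]
          exact Real.exp_le_exp.2 hup

section HolderBump

variable {X : Type*} [PseudoMetricSpace X]

/-- The paper's `f_q` is `holderBump ((1/q)ℤ^d/ℤ^d) (q ^ 2) α`; the scale `4 * q` used below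
already gives `∫ f ≤ 1/2`, which is all the argument needs. -/
def holderBump (S : Set X) (c α : ℝ) (x : X) : ℝ := 1 - min 1 ((c * infDist x S) ^ α)

variable {S : Set X} {c α : ℝ}

theorem holderBump_mem_Icc (hc : 0 ≤ c) (x : X) : holderBump S c α x ∈ Icc 0 1 := by
  have : 0 ≤ (c * infDist x S) ^ α := Real.rpow_nonneg (mul_nonneg hc infDist_nonneg) α
  constructor <;> unfold holderBump <;> linarith [min_le_left 1 ((c * infDist x S) ^ α),
    le_min zero_le_one this]

theorem abs_holderBump_le_one (hc : 0 ≤ c) (x : X) : |holderBump S c α x| ≤ 1 := by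
  have := holderBump_mem_Icc (S := S) (α := α) hc x
  rw [abs_le]
  constructor <;> linarith [this.1, this.2]

theorem abs_holderBump_sub_le (hc : 0 ≤ c) (hα : 0 ≤ α) (hα1 : α ≤ 1) (x y : X) :
    |holderBump S c α x - holderBump S c α y| ≤ c ^ α * dist x y ^ α := by
  have hx := mul_nonneg hc (infDist_nonneg (x := x) (s := S))
  have hy := mul_nonneg hc (infDist_nonneg (x := y) (s := S))
  calc |holderBump S c α x - holderBump S c α y|
      ≤ |(c * infDist x S) ^ α - (c * infDist y S) ^ α| := by
        simpa [holderBump, abs_sub_comm] using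
          abs_min_sub_min_le_max 1 ((c * infDist y S) ^ α) 1 ((c * infDist x S) ^ α)
    _ ≤ |c * infDist x S - c * infDist y S| ^ α := abs_rpow_sub_rpow_le hx hy hα hα1
    _ ≤ (c * dist x y) ^ α := by
        refine Real.rpow_le_rpow (abs_nonneg _) ?_ hα
        rw [← mul_sub, abs_mul, abs_of_nonneg hc]
        have hxy := infDist_le_infDist_add_dist (x := x) (y := y) (s := S)
        have hyx := infDist_le_infDist_add_dist (x := y) (y := x) (s := S)
        rw [dist_comm] at hyx
        exact mul_le_mul_of_nonneg_left (abs_sub_le_iff.2 ⟨by linarith, by linarith⟩) hc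
    _ = c ^ α * dist x y ^ α := Real.mul_rpow hc dist_nonneg

theorem one_sub_rpow_le_holderBump (hc : 0 ≤ c) (hα : 0 ≤ α) {x : X} {η : ℝ}
    (hx : infDist x S ≤ η) : 1 - (c * η) ^ α ≤ holderBump S c α x := by
  have := Real.rpow_le_rpow (mul_nonneg hc infDist_nonneg) (mul_le_mul_of_nonneg_left hx hc) hα
  unfold holderBump
  linarith [min_le_right 1 ((c * infDist x S) ^ α)]

theorem holderBump_le_indicator (hS : S.Nonempty) (hc : 0 < c) (hα : 0 ≤ α) (x : X) :
    holderBump S c α x ≤ (thickening c⁻¹ S).indicator 1 x := by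
  by_cases hx : x ∈ thickening c⁻¹ S
  · simpa [hx] using (holderBump_mem_Icc hc.le x).2
  · rw [indicator_of_notMem hx]
    rw [mem_thickening_iff_infDist_lt hS, not_lt, inv_le_iff_one_le_mul₀' hc] at hx
    simp [holderBump, min_eq_left (Real.one_le_rpow hx hα)]

theorem continuous_holderBump (hα : 0 ≤ α) : Continuous (holderBump S c α) :=
  continuous_const.sub <| continuous_const.min <|
    (continuous_const.mul (continuous_infDist_pt S)).rpow_const fun _ => Or.inr hα

theorem integral_holderBump_le [MeasurableSpace X] [OpensMeasurableSpace X] {μ : Measure X}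
    [IsFiniteMeasure μ] (hS : S.Nonempty) (hc : 0 < c) (hα : 0 ≤ α) :
    ∫ x, holderBump S c α x ∂μ ≤ μ.real (thickening c⁻¹ S) := by
  have hmeas : MeasurableSet (thickening c⁻¹ S) := isOpen_thickening.measurableSet
  rw [← integral_indicator_one hmeas]
  refine integral_mono ?_ ((integrable_const 1).indicator hmeas)
    (holderBump_le_indicator hS hc hα)
  exact .of_bound (continuous_holderBump hα).aestronglyMeasurable 1
    (.of_forall fun x => abs_holderBump_le_one hc.le x)

theorem one_sub_rpow_le_iterate_holderBump {P : (X → ℝ) → X → ℝ} {T₁ T₂ : X → X}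
    (hP : ∀ g x, P g x = 2⁻¹ * g (T₁ x) + 2⁻¹ * g (T₂ x)) {M ε : ℝ}
    (hM : 2 ≤ M) (hε : 0 ≤ ε) (hT₁ : ∀ x, infDist (T₁ x) S ≤ M * infDist x S + ε)
    (hT₂ : ∀ x, infDist (T₂ x) S ≤ M * infDist x S + ε) (hc : 0 ≤ c) (hα : 0 ≤ α) (n : ℕ)
    {x : X} (hx : x ∈ S) : 1 - (c * (M ^ n * ε)) ^ α ≤ P^[n] (holderBump S c α) x := by
  have hh : Monotone fun y => M * y + ε := (monotone_id.const_mul (by linarith)).add_const ε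
  have key := le_iterate_of_average (D := (infDist · S)) hP hh hT₁ hT₂
    (ψ := fun η => 1 - (c * η) ^ α) (fun _ _ => one_sub_rpow_le_holderBump hc hα) n x 0
    (infDist_zero_of_mem hx).le
  obtain ⟨h0, hle⟩ := iterate_affine_zero_mem_Icc hM hε n
  refine le_trans ?_ key
  gcongr

end HolderBump

instance {d : ℕ} : MeasurableSingletonClass (Matrix (Fin d) (Fin d) ℤ) :=
  inferInstanceAs (MeasurableSingletonClass (Fin d → Fin d → ℤ))

instance {d : ℕ} : MeasurableSingletonClass (SLZ d) :=
  inferInstanceAs (MeasurableSingletonClass {A : Matrix (Fin d) (Fin d) ℤ // A.det = 1})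

theorem matApply_nsmul {d : ℕ} (A : Matrix (Fin d) (Fin d) ℤ) (n : ℕ) (x : Td d) :
    matApply A (n • x) = n • matApply A x := by
  ext i
  simp only [matApply, Pi.smul_apply, Finset.smul_sum]
  exact Finset.sum_congr rfl fun j _ => smul_comm _ _ _

theorem matApply_zero {d : ℕ} (A : Matrix (Fin d) (Fin d) ℤ) : matApply A (0 : Td d) = 0 := by
  simpa using matApply_nsmul A 0 0

theorem encard_torsion_le {d q : ℕ} (hq : 0 < q) :
    {x : Td d | q • x = 0}.encard ≤ q ^ d := by
  have hpi : {x : Td d | q • x = 0} = univ.pi fun _ => {y : AddCircle (1 : ℝ) | q • y = 0} := by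
    ext x
    simp [funext_iff]
  rw [hpi, encard_pi_eq_prod_encard]
  calc ∏ _ : Fin d, {y : AddCircle (1 : ℝ) | q • y = 0}.encard ≤ ∏ _ : Fin d, (q : ℕ∞) :=
        Finset.prod_le_prod' fun _ _ => AddCircle.card_torsion_le_of_isSMulRegular 1 q hq.ne'
          (.of_ne_zero (Nat.cast_ne_zero.2 hq.ne'))
    _ = q ^ d := by simp

theorem volume_thickening_le {d : ℕ} {S : Set (Td d)} (hS : S.Finite) {r : ℝ} (hr : 0 ≤ r) :
    volume (thickening r S) ≤ S.encard * ENNReal.ofReal (2 * r) ^ d := by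
  have hball (x : Td d) : volume (closedBall x r) ≤ ENNReal.ofReal (2 * r) ^ d := by
    rw [closedBall_pi x hr, volume_pi_pi]
    simp_rw [AddCircle.volume_closedBall]
    calc ∏ _ : Fin d, ENNReal.ofReal (min 1 (2 * r)) ≤ ∏ _ : Fin d, ENNReal.ofReal (2 * r) :=
          Finset.prod_le_prod' fun _ _ => ENNReal.ofReal_le_ofReal (min_le_right _ _)
      _ = _ := by simp
  calc volume (thickening r S) ≤ volume (⋃ x ∈ S, closedBall x r) := by
        rw [← hS.isCompact.cthickening_eq_biUnion_closedBall hr]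
        exact measure_mono (thickening_subset_cthickening _ _)
    _ ≤ ∑' x : S, volume (closedBall (x : Td d) r) := measure_biUnion_le _ hS.countable _
    _ ≤ ∑' _ : S, ENNReal.ofReal (2 * r) ^ d := ENNReal.tsum_le_tsum fun x => hball x
    _ = S.encard * ENNReal.ofReal (2 * r) ^ d := by rw [ENNReal.tsum_const]; rfl

theorem lipschitzWith_matApply {d : ℕ} (A : Matrix (Fin d) (Fin d) ℤ) :
    LipschitzWith (∑ i, ∑ j, ‖A i j‖₊) (matApply A) := by
  refine LipschitzWith.of_dist_le_mul fun x y => (dist_pi_le_iff (by positivity)).2 fun i => ?_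
  calc dist (matApply A x i) (matApply A y i) = ‖∑ j, A i j • (x j - y j)‖ := by
        simp [matApply, dist_eq_norm, smul_sub, Finset.sum_sub_distrib]
    _ ≤ ∑ j, ‖A i j‖ * dist x y := by
        refine norm_sum_le_of_le _ fun j _ => (norm_zsmul_le _ _).trans ?_
        rw [← dist_eq_norm]
        exact mul_le_mul_of_nonneg_left (dist_le_pi_dist x y j) (norm_nonneg _)
    _ ≤ ((∑ i, ∑ j, ‖A i j‖₊ : ℝ≥0) : ℝ) * dist x y := by
        push_cast
        rw [← Finset.sum_mul]
        exact mul_le_mul_of_nonneg_right (Finset.single_le_sum (f := fun i => ∑ j, ‖A i j‖)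
          (fun _ _ => by positivity) (Finset.mem_univ i)) dist_nonneg

theorem exists_lipschitzWith_matApply {d : ℕ} (a b : SLZ d) :
    ∃ M : ℝ≥0, 2 ≤ M ∧ LipschitzWith M (matApply a.1) ∧ LipschitzWith M (matApply b.1) :=
  ⟨2 + ∑ i, ∑ j, ‖a.1 i j‖₊ + ∑ i, ∑ j, ‖b.1 i j‖₊, le_add_right (le_add_right le_rfl),
    (lipschitzWith_matApply _).weaken (le_add_right le_add_self),
    (lipschitzWith_matApply _).weaken le_add_self⟩

theorem nsmul_rationalPoint_eq_zero {d q : ℕ} (hq : 0 < q) (p : Fin d → ℤ) :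
    q • (fun i => (((p i : ℝ) / q : ℝ) : AddCircle (1 : ℝ))) = 0 := by
  funext i
  simp [← AddCircle.coe_nsmul, mul_div_cancel₀ _ (by positivity : (q : ℝ) ≠ 0)]

theorem infDist_actT_torsion_le {d q : ℕ} {g : SLZ d × Td d} {M : ℝ≥0}
    (hM : LipschitzWith M (matApply g.1.1)) {w : Td d} (hw : q • w = 0) (x : Td d) :
    infDist (actT g x) {y | q • y = 0} ≤ M * infDist x {y | q • y = 0} + dist g.2 w := by
  have hT : LipschitzWith M fun y => matApply g.1.1 y + w :=
    LipschitzWith.of_dist_le_mul fun y z => by simpa [dist_add_right] using hM.dist_le_mul y z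
  have hmaps : MapsTo (fun y => matApply g.1.1 y + w) {y | q • y = 0} {y | q • y = 0} :=
    fun y (hy : q • y = 0) => by
      rw [mem_ofPred_eq, nsmul_add, ← matApply_nsmul, hy, hw, add_zero, matApply_zero]
  calc infDist (actT g x) {y | q • y = 0}
      ≤ infDist (matApply g.1.1 x + w) {y | q • y = 0} + dist (actT g x) (matApply g.1.1 x + w) :=
        infDist_le_infDist_add_dist
    _ ≤ M * infDist x {y | q • y = 0} + dist g.2 w := by
        rw [actT, dist_add_left]
        gcongr
        exact hT.infDist_le_mul_infDist ⟨0, by simp⟩ hmaps x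

theorem integral_holderBump_torsion_le {d q : ℕ} (hd : 0 < d) (hq : 0 < q) {α : ℝ}
    (hα : 0 ≤ α) : ∫ x, holderBump {y : Td d | q • y = 0} (4 * q) α x ≤ 2⁻¹ := by
  set S := {y : Td d | q • y = 0}
  have hcard : S.encard ≤ (q ^ d : ℕ) := by exact_mod_cast encard_torsion_le hq
  have hvol : volume (thickening (4 * q : ℝ)⁻¹ S) ≤ ENNReal.ofReal (2⁻¹ ^ d) := by
    calc volume (thickening (4 * q : ℝ)⁻¹ S)
        ≤ S.encard * ENNReal.ofReal (2 * (4 * q : ℝ)⁻¹) ^ d :=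
          volume_thickening_le (finite_of_encard_le_coe hcard) (by positivity)
      _ ≤ ENNReal.ofReal (q ^ d) * ENNReal.ofReal (2 * (4 * q : ℝ)⁻¹) ^ d := by
          gcongr
          simpa [← ENat.toENNReal_le] using hcard
      _ = ENNReal.ofReal (2⁻¹ ^ d) := by
          rw [← ENNReal.ofReal_pow (by positivity), ← ENNReal.ofReal_mul (by positivity),
            ← mul_pow]
          congr 2
          field_simp
          ring
  calc ∫ x, holderBump S (4 * q) α x ≤ volume.real (thickening (4 * q : ℝ)⁻¹ S) :=
        integral_holderBump_le ⟨0, by simp [S]⟩ (by positivity) hα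
    _ ≤ 2⁻¹ ^ d := ENNReal.toReal_le_of_le_ofReal (by positivity) hvol
    _ ≤ 2⁻¹ := pow_le_of_le_one (by norm_num) (by norm_num) hd.ne'

theorem quarter_le_rpow_of_mixing {d q n : ℕ} (hd : 0 < d) (hq : 0 < q) {α : ℝ} (hα : 0 < α)
    {a b : SLZ d} {v w : Td d} (hw : q • w = 0) {M : ℝ≥0} (hM : 2 ≤ M)
    (ha : LipschitzWith M (matApply a.1)) (hb : LipschitzWith M (matApply b.1))
    {P : (Td d → ℝ) → Td d → ℝ}
    (hP : ∀ g x, P g x = 2⁻¹ * g (actT (a, 0) x) + 2⁻¹ * g (actT (b, v) x))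
    (hmix : |P^[n] (holderBump {y | q • y = 0} (4 * q) α) 0 -
      ∫ y, holderBump {y : Td d | q • y = 0} (4 * q) α y| ≤ 4⁻¹) :
    4⁻¹ ≤ (4 * q * (M ^ n * dist v w)) ^ α := by
  have hT₁ (x : Td d) : infDist (actT (a, 0) x) {y | q • y = 0} ≤
      M * infDist x {y | q • y = 0} + dist v w := by
    have := infDist_actT_torsion_le (g := (a, 0)) ha (smul_zero q) x
    rw [dist_self] at this
    linarith [dist_nonneg (x := v) (y := w)]
  have hlow := one_sub_rpow_le_iterate_holderBump (c := 4 * q) hP (by exact_mod_cast hM)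
    dist_nonneg hT₁ (infDist_actT_torsion_le (g := (b, v)) hb hw) (by positivity) hα.le n
    (smul_zero q)
  have hint := integral_holderBump_torsion_le hd hq hα.le (d := d)
  linarith [(abs_le.1 hmix).2]

theorem mul_exp_neg_mul_le_quarter {C t α : ℝ} {q n : ℕ} (hC : 0 < C) (hq : 0 < q)
    (hα : α ≤ 1) (hn : (32 * C + 1) * q ≤ Real.exp (t * n)) :
    C * Real.exp (-t * n) * (1 + (4 * q) ^ α) ≤ 4⁻¹ := by
  have hq' : (1 : ℝ) ≤ q := by exact_mod_cast hq
  have hpow : (4 * q : ℝ) ^ α ≤ 4 * q := by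
    simpa using Real.rpow_le_rpow_of_exponent_le (by linarith) hα
  have hexp : Real.exp (-t * n) ≤ ((32 * C + 1) * q)⁻¹ := by
    rw [neg_mul, Real.exp_neg]
    exact inv_anti₀ (by positivity) hn
  calc C * Real.exp (-t * n) * (1 + (4 * q) ^ α) ≤ C * ((32 * C + 1) * q)⁻¹ * (8 * q) := by
        gcongr
        linarith
    _ = 8 * C / (32 * C + 1) := by field_simp
    _ ≤ 4⁻¹ := by
        rw [div_le_iff₀ (by positivity)]
        linarith

theorem div_rpow_le_of_quarter_le_rpow {α K β ε m : ℝ} {q : ℕ} (hα : 0 < α) (hK : 0 < K)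
    (hq : 0 < q) (hε : 0 ≤ ε) (hm : 0 ≤ m) (hquarter : 4⁻¹ ≤ (4 * q * (m * ε)) ^ α)
    (hmK : m ≤ K * q ^ β) : 4⁻¹ ^ α⁻¹ / (4 * K) / (q : ℝ) ^ (1 + β) ≤ ε := by
  have hq' : (0 : ℝ) < q := by exact_mod_cast hq
  have h := Real.rpow_le_rpow (by norm_num) hquarter (inv_nonneg.2 hα.le)
  rw [Real.rpow_rpow_inv (by positivity) hα.ne'] at h
  rw [Real.rpow_add hq', Real.rpow_one, div_div, div_le_iff₀ (by positivity)]
  calc 4⁻¹ ^ α⁻¹ ≤ 4 * q * (m * ε) := h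
    _ ≤ 4 * q * (K * q ^ β * ε) := by gcongr
    _ = ε * (4 * K * (q * q ^ β)) := by ring

/-- If for `μ = ½δ_{(a,0)} + ½δ_{(b,v)}` the Markov operator satisfies
`sup_x |P^n f(x) - ∫ f dν| ≤ C e^{-tn} ‖f‖_α` for all `α`-Hölder `f` (with
`‖f‖_α = ‖f‖_∞ + m_α(f)`), then `v` is diophantine: there are `C₀, L > 0` with
`d(v, p/q) ≥ C₀ / q^L` for every rational point `p/q ∈ Q^d/Z^d`. -/
theorem stmt18 (d : ℕ) (α C t : ℝ) (hα0 : 0 < α) (hα1 : α ≤ 1) (hC : 0 < C) (ht : 0 < t)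
    (a b : SLZ d) (v : Td d)
    (μ : Measure (SLZ d × Td d))
    (hμ : μ = (2⁻¹ : ENNReal) • Measure.dirac (a, (0 : Td d)) +
      (2⁻¹ : ENNReal) • Measure.dirac (b, v))
    (P : (Td d → ℝ) → Td d → ℝ)
    (hP : ∀ f x, P f x = ∫ g, f (actT g x) ∂μ)
    (hconv : ∀ (f : Td d → ℝ) (A B : ℝ), (∀ x, |f x| ≤ A) →
      (∀ x y, |f x - f y| ≤ B * dist x y ^ α) →
      ∀ (n : ℕ) (x : Td d),
        |(P^[n]) f x - ∫ y, f y ∂(volume : Measure (Td d))| ≤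
          C * Real.exp (-t * n) * (A + B)) :
    ∃ C₀ L : ℝ, 0 < C₀ ∧ 0 < L ∧ ∀ (p : Fin d → ℤ) (q : ℕ), 0 < q →
      C₀ / (q : ℝ) ^ L ≤
        dist v (fun i => (((p i : ℝ) / (q : ℝ) : ℝ) : AddCircle (1 : ℝ))) := by
  obtain rfl | hd := Nat.eq_zero_or_pos d
  · have h := hconv 0 0 (-1) (by simp) (fun x y => by simp [Subsingleton.elim x y,
      Real.zero_rpow hα0.ne']) 0 0
    norm_num at h
    exact (hC.not_ge h).elim
  obtain ⟨M, hM, ha, hb⟩ := exists_lipschitzWith_matApply a b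
  have hPf (g : Td d → ℝ) (x : Td d) :
      P g x = 2⁻¹ * g (actT (a, 0) x) + 2⁻¹ * g (actT (b, v) x) := by
    rw [hP, hμ, integral_smul_dirac_add_smul_dirac _ (by simp) (by simp)]
    simp
  set β := Real.log M / t
  have hβ : 0 ≤ β := div_nonneg (Real.log_nonneg (by exact_mod_cast hM.trans' one_le_two)) ht.le
  set K := (Real.exp t * (32 * C + 1)) ^ β
  refine ⟨4⁻¹ ^ α⁻¹ / (4 * K), 1 + β, by positivity, by positivity, fun p q hq => ?_⟩
  have hq' : (1 : ℝ) ≤ q := by exact_mod_cast hq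
  obtain ⟨n, hn, hMn⟩ := exists_nat_le_exp_and_pow_le ht (y := (32 * C + 1) * q)
    (by nlinarith) (M := M) (by exact_mod_cast hM.trans' one_le_two)
  have hquarter := quarter_le_rpow_of_mixing (n := n) hd hq hα0
    (nsmul_rationalPoint_eq_zero hq p) hM ha hb hPf <|
    (hconv _ 1 ((4 * q) ^ α) (abs_holderBump_le_one (by positivity))
      (abs_holderBump_sub_le (by positivity) hα0.le hα1) n 0).trans
      (mul_exp_neg_mul_le_quarter hC hq hα1 hn)
  refine div_rpow_le_of_quarter_le_rpow hα0 (by positivity) hq dist_nonneg (by positivity)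
    hquarter ?_
  rwa [← mul_assoc, Real.mul_rpow (by positivity) (by positivity)] at hMn

end
end
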